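/- For every infinite complete pointed metric space M and every n ∈ ℕ, the set SNA(M) contains a linear subspace of Lip_0(M) of dimension n (indeed, the main theorem's c_0 copy yields finite-dimensional subspaces of every dimension contained in SNA(M)). -/
import Mathlib


open Metric Set Filter Topology ZeroAtInfty

/-- The Lipschitz norm (best Lipschitz constant, as a supremum of difference quotients). -/
noncomputable def lipNorm {M : Type*} [MetricSpace M] (f : M → ℝ) : ℝ :=
  sSup {r : ℝ | ∃ x y : M, x ≠ y ∧ r = |f x - f y| / dist x y}

/-- `f` strongly attains its Lipschitz norm. -/
def StronglyAttains {M : Type*} [MetricSpace M] (f : M → ℝ) : Prop :=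
  ∃ x y : M, x ≠ y ∧ (f x - f y) / dist x y = lipNorm f

/-- `f` is Lipschitz with (real) constant `K`. -/
def IsLipWith {M : Type*} [MetricSpace M] (K : ℝ) (f : M → ℝ) : Prop :=
  ∀ x y : M, |f x - f y| ≤ K * dist x y

/-- Distance between two subsets of a metric space. -/
noncomputable def setDist {M : Type*} [MetricSpace M] (A B : Set M) : ℝ :=
  sInf {r : ℝ | ∃ a ∈ A, ∃ b ∈ B, r = dist a b}

/-- A subset is uniformly discrete. -/
def UnifDiscreteOn {M : Type*} [MetricSpace M] (s : Set M) : Prop :=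
  ∃ r > 0, ∀ x ∈ s, ∀ y ∈ s, x ≠ y → r ≤ dist x y

/-- `R(x)`: the supremum of radii `R ≥ 0` with `closedBall x R = {x}`. -/
noncomputable def isolRad {M : Type*} [MetricSpace M] (x : M) : ℝ :=
  sSup {R : ℝ | 0 ≤ R ∧ Metric.closedBall x R = {x}}

section SNA
variable {M : Type*} [MetricSpace M]

private lemma attains_of_dominant (g : M → ℝ) (u v : M) (huv : u ≠ v)
    (hdom : ∀ a b : M, a ≠ b → |g a - g b| ≤ |g u - g v| / dist u v * dist a b) :
    StronglyAttains g := by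
  have hduv : (0:ℝ) < dist u v := dist_pos.mpr huv
  set q : ℝ := |g u - g v| / dist u v with hqdef
  have hq0 : 0 ≤ q := div_nonneg (abs_nonneg _) dist_nonneg
  have hmem : q ∈ {r : ℝ | ∃ x y : M, x ≠ y ∧ r = |g x - g y| / dist x y} :=
    ⟨u, v, huv, rfl⟩
  have hub : ∀ r ∈ {r : ℝ | ∃ x y : M, x ≠ y ∧ r = |g x - g y| / dist x y}, r ≤ q := by
    rintro r ⟨a, b, hab, rfl⟩
    rw [div_le_iff₀ (dist_pos.mpr hab)]
    exact hdom a b hab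
  have hlip : lipNorm g = q :=
    le_antisymm (Real.sSup_le hub hq0) (le_csSup ⟨q, hub⟩ hmem)
  rcases le_total (g v) (g u) with h | h
  · refine ⟨u, v, huv, ?_⟩
    rw [hlip, hqdef, abs_of_nonneg (by linarith : (0:ℝ) ≤ g u - g v)]
  · refine ⟨v, u, huv.symm, ?_⟩
    rw [hlip, hqdef, dist_comm v u, abs_of_nonpos (by linarith : g u - g v ≤ 0)]
    ring_nf

set_option linter.unusedSectionVars false in
private lemma linIndep_of_eval {n : ℕ} (f : Fin n → M → ℝ)
    (h : ∀ k, ∃ pt : M, f k pt ≠ 0 ∧ ∀ j, j ≠ k → f j pt = 0) :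
    LinearIndependent ℝ f := by
  rw [Fintype.linearIndependent_iff]
  intro g hg k
  obtain ⟨pt, hpt, hz⟩ := h k
  have h1 := congrFun hg pt
  simp only [Finset.sum_apply, Pi.smul_apply, smul_eq_mul, Pi.zero_apply] at h1
  have h2 : ∑ j, g j * f j pt = g k * f k pt :=
    Finset.sum_eq_single k (fun j _ hj => by rw [hz j hj, mul_zero])
      (fun hk => absurd (Finset.mem_univ k) hk)
  rw [h2] at h1
  rcases mul_eq_zero.mp h1 with h | h
  · exact h
  · exact absurd h hpt

private lemma cone_construction (z : M) {n : ℕ} (x y : Fin (n+1) → M)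
    (hxy : ∀ k, x k ≠ y k)
    (hz : ∀ k, dist (x k) (y k) ≤ dist z (x k))
    (hsep : ∀ j k, j ≠ k → dist (x j) (y j) + dist (x k) (y k) ≤ dist (x j) (x k)) :
    ∃ f : Fin (n+1) → M → ℝ, LinearIndependent ℝ f ∧
      (∀ i, f i z = 0 ∧ ∃ K : ℝ, IsLipWith K (f i)) ∧
      ∀ c : Fin (n+1) → ℝ, StronglyAttains (fun w => ∑ i, c i * f i w) := by
  set d : Fin (n+1) → ℝ := fun k => dist (x k) (y k) with hd
  have hdpos : ∀ k, 0 < d k := fun k => dist_pos.mpr (hxy k)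
  set F : Fin (n+1) → M → ℝ := fun k w => max 0 (d k - dist w (x k)) with hF
  have fnn : ∀ k w, 0 ≤ F k w := fun k w => le_max_left _ _
  have fzero_far : ∀ k w, d k ≤ dist w (x k) → F k w = 0 := by
    intro k w h
    exact max_eq_left (by linarith)
  have fpos_dist : ∀ k w, 0 < F k w → dist w (x k) < d k := by
    intro k w h
    by_contra hcon
    rw [fzero_far k w (not_lt.mp hcon)] at h
    exact lt_irrefl 0 h
  have fle : ∀ k w, F k w ≤ d k - dist w (x k) ∨ F k w = 0 := by
    intro k w
    rcases le_or_gt (F k w) 0 with h | h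
    · exact Or.inr (le_antisymm h (fnn k w))
    · left
      have := fpos_dist k w h
      rw [hF]
      simp only
      rw [max_eq_right (by linarith)]
  have fval_pos : ∀ k w, 0 < F k w → F k w = d k - dist w (x k) := by
    intro k w h
    have h2 := fpos_dist k w h
    rw [hF]; simp only
    exact max_eq_right (by linarith)
  have huniq : ∀ j k w, 0 < F j w → j ≠ k → F k w = 0 := by
    intro j k w hj hjk
    by_contra hcon
    have hk : 0 < F k w := lt_of_le_of_ne (fnn k w) (Ne.symm hcon)
    have h1 := fpos_dist j w hj
    have h2 := fpos_dist k w hk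
    have h3 := hsep j k hjk
    have h4 := dist_triangle (x j) w (x k)
    rw [dist_comm (x j) w] at h4
    linarith
  have onelip : ∀ k (a b : M), |F k a - F k b| ≤ dist a b := by
    intro k a b
    have h1 : |F k a - F k b| ≤ |(d k - dist a (x k)) - (d k - dist b (x k))| := by
      rw [hF]; simp only
      rw [max_comm 0 (d k - dist a (x k)), max_comm 0 (d k - dist b (x k))]
      exact abs_max_sub_max_le_abs _ _ _
    have h2 : (d k - dist a (x k)) - (d k - dist b (x k)) = dist b (x k) - dist a (x k) := by ring
    rw [h2] at h1
    calc |F k a - F k b| ≤ |dist b (x k) - dist a (x k)| := h1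
      _ ≤ dist b a := abs_dist_sub_le _ _ _
      _ = dist a b := dist_comm _ _
  -- key dominance
  have key : ∀ (c : Fin (n+1) → ℝ) (C : ℝ), 0 ≤ C → (∀ k, |c k| ≤ C) → ∀ a b : M,
      |(∑ i, c i * F i a) - ∑ i, c i * F i b| ≤ C * dist a b := by
    intro c C hC0 hC a b
    have sum_of_pos : ∀ (w : M) (j : Fin (n+1)), 0 < F j w →
        (∑ i, c i * F i w) = c j * F j w := by
      intro w j hj
      exact Finset.sum_eq_single j
        (fun i _ hij => by rw [huniq j i w hj (Ne.symm hij), mul_zero])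
        (fun hk => absurd (Finset.mem_univ j) hk)
    have sum_of_none : ∀ (w : M), (¬ ∃ j, 0 < F j w) → (∑ i, c i * F i w) = 0 := by
      intro w hw
      push_neg at hw
      exact Finset.sum_eq_zero fun i _ => by
        rw [le_antisymm (hw i) (fnn i w), mul_zero]
    have key1 : ∀ a b : M, (¬ ∃ k, 0 < F k b) →
        |(∑ i, c i * F i a) - ∑ i, c i * F i b| ≤ C * dist a b := by
      intro a b hb
      rw [sum_of_none b hb, sub_zero]
      by_cases ha : ∃ j, 0 < F j a
      · obtain ⟨j, hja⟩ := ha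
        rw [sum_of_pos a j hja, abs_mul, abs_of_pos hja]
        push_neg at hb
        have hfb : F j b = 0 := le_antisymm (hb j) (fnn j b)
        have hbd : d j ≤ dist b (x j) := by
          by_contra hcon
          have : 0 < F j b := by
            rw [hF]; simp only
            exact lt_max_of_lt_right (by linarith)
          linarith [hb j]
        have hfa : F j a ≤ dist a b := by
          have h1 := fval_pos j a hja
          have h2 := dist_triangle b a (x j)
          rw [dist_comm b a] at h2
          linarith
        calc |c j| * F j a ≤ C * F j a := by
              apply mul_le_mul_of_nonneg_right (hC j) (fnn j a)
          _ ≤ C * dist a b := mul_le_mul_of_nonneg_left hfa hC0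
      · rw [sum_of_none a ha]
        simpa using mul_nonneg hC0 (dist_nonneg (x := a) (y := b))
    by_cases hb : ∃ k, 0 < F k b
    · by_cases ha : ∃ j, 0 < F j a
      · obtain ⟨j, hja⟩ := ha
        obtain ⟨k, hkb⟩ := hb
        rw [sum_of_pos a j hja, sum_of_pos b k hkb]
        by_cases hjk : j = k
        · subst hjk
          rw [← mul_sub, abs_mul]
          calc |c j| * |F j a - F j b| ≤ C * |F j a - F j b| :=
                mul_le_mul_of_nonneg_right (hC j) (abs_nonneg _)
            _ ≤ C * dist a b := mul_le_mul_of_nonneg_left (onelip j a b) hC0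
        · have hkey : F j a + F k b ≤ dist a b := by
            have h1 := fval_pos j a hja
            have h2 := fval_pos k b hkb
            have h3 := hsep j k hjk
            have h4 := dist_triangle (x j) a (x k)
            have h5 := dist_triangle a b (x k)
            rw [dist_comm (x j) a] at h4
            rw [dist_comm b (x k)] at *
            linarith [dist_comm (x k) b ▸ (dist_triangle a b (x k))]
          calc |c j * F j a - c k * F k b| ≤ |c j * F j a| + |c k * F k b| := by
                have := abs_add_le (c j * F j a) (-(c k * F k b))
                simpa [sub_eq_add_neg, abs_neg] using this
            _ = |c j| * F j a + |c k| * F k b := by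
                rw [abs_mul, abs_mul, abs_of_pos hja, abs_of_pos hkb]
            _ ≤ C * F j a + C * F k b :=
                add_le_add (mul_le_mul_of_nonneg_right (hC j) (fnn j a))
                  (mul_le_mul_of_nonneg_right (hC k) (fnn k b))
            _ = C * (F j a + F k b) := by ring
            _ ≤ C * dist a b := mul_le_mul_of_nonneg_left hkey hC0
      · have h := key1 b a ha
        rw [abs_sub_comm, dist_comm] at h
        exact h
    · exact key1 a b hb
  have Fxx : ∀ k, F k (x k) = d k := by
    intro k
    rw [hF]; simp only [dist_self, sub_zero]
    exact max_eq_right (le_of_lt (hdpos k))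
  have Fxo : ∀ j k, j ≠ k → F j (x k) = 0 := by
    intro j k hjk
    apply fzero_far
    have h1 := hsep j k hjk
    rw [dist_comm (x j) (x k)] at h1
    linarith [hdpos k]
  have Fyzero : ∀ i k, F i (y k) = 0 := by
    intro i k
    apply fzero_far
    by_cases hik : i = k
    · subst hik
      rw [dist_comm]
    · have h1 := hsep i k hik
      have h2 := dist_triangle (x i) (y k) (x k)
      rw [dist_comm (y k) (x k)] at h2
      rw [dist_comm (y k) (x i)]
      linarith
  refine ⟨F, ?_, ?_, ?_⟩
  · apply linIndep_of_eval
    intro k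
    refine ⟨x k, ?_, fun j hj => Fxo j k hj⟩
    rw [Fxx k]
    exact ne_of_gt (hdpos k)
  · intro i
    refine ⟨fzero_far i z (hz i), 1, fun a b => by simpa using onelip i a b⟩
  · intro c
    obtain ⟨k₀, -, hk₀⟩ := Finset.exists_max_image Finset.univ (fun k => |c k|)
      ⟨0, Finset.mem_univ 0⟩
    have hGx : (∑ i, c i * F i (x k₀)) = c k₀ * d k₀ := by
      rw [Finset.sum_eq_single k₀
        (fun i _ hik => by rw [Fxo i k₀ hik, mul_zero])
        (fun hk => absurd (Finset.mem_univ k₀) hk), Fxx k₀]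
    have hGy : (∑ i, c i * F i (y k₀)) = 0 :=
      Finset.sum_eq_zero fun i _ => by rw [Fyzero i k₀, mul_zero]
    apply attains_of_dominant _ (x k₀) (y k₀) (hxy k₀)
    intro a b hab
    have hquot : |(∑ i, c i * F i (x k₀)) - ∑ i, c i * F i (y k₀)| /
        dist (x k₀) (y k₀) = |c k₀| := by
      rw [hGx, hGy, sub_zero, abs_mul, abs_of_pos (hdpos k₀)]
      rw [mul_div_assoc, div_self (ne_of_gt (hdpos k₀)), mul_one]
    rw [hquot]
    exact key c (|c k₀|) (abs_nonneg _) (fun k => hk₀ k (Finset.mem_univ k)) a b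

private lemma dipole_construction (z : M) {n : ℕ} (x y : Fin (n+1) → M) (β : Fin (n+1) → ℝ)
    (hβ : ∀ k, 0 ≤ β k)
    (hxinj : Function.Injective x)
    (hxny : ∀ j k, x j ≠ y k)
    (hyy : ∀ j k, j ≠ k → β j ≠ 0 → y j ≠ y k)
    (hzx : ∀ k, z ≠ x k)
    (hzy : ∀ k, β k ≠ 0 → z ≠ y k)
    (hbx : ∀ k (w : M), w ≠ z → (∀ j, w ≠ x j) → (∀ j, w ≠ y j) →
      dist (x k) (y k) ≤ (1 + β k) * dist (x k) w)
    (hby : ∀ k (w : M), w ≠ z → (∀ j, w ≠ x j) → (∀ j, w ≠ y j) →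
      β k * dist (x k) (y k) ≤ (1 + β k) * dist (y k) w) :
    ∃ f : Fin (n+1) → M → ℝ, LinearIndependent ℝ f ∧
      (∀ i, f i z = 0 ∧ ∃ K : ℝ, IsLipWith K (f i)) ∧
      ∀ c : Fin (n+1) → ℝ, StronglyAttains (fun w => ∑ i, c i * f i w) := by
  classical
  set d : Fin (n+1) → ℝ := fun k => dist (x k) (y k) with hd
  have hdpos : ∀ k, 0 < d k := fun k => dist_pos.mpr (hxny k k)
  have hβ1 : ∀ k, (0:ℝ) < 1 + β k := fun k => by linarith [hβ k]
  set F : Fin (n+1) → M → ℝ :=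
    fun k w => (if w = x k then (1:ℝ) else 0) - β k * (if w = y k then 1 else 0) with hF
  have hFxx : ∀ k, F k (x k) = 1 := by
    intro k
    simp [hF, hxny k k]
  have hFxo : ∀ j k, j ≠ k → F k (x j) = 0 := by
    intro j k hjk
    simp [hF, hxinj.ne hjk, hxny j k]
  have hFyy : ∀ k, F k (y k) = -(β k) := by
    intro k
    simp [hF, Ne.symm (hxny k k)]
  have hFyo : ∀ j k, j ≠ k → F k (y j) = 0 := by
    intro j k hjk
    have h1 : y j ≠ x k := fun h => hxny k j h.symm
    by_cases hβk : β k = 0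
    · simp [hF, h1, hβk]
    · have h2 : y j ≠ y k := fun h => (hyy k j (Ne.symm hjk) hβk) h.symm
      simp [hF, h1, h2]
  have hFz : ∀ k, F k z = 0 := by
    intro k
    have h1 : z ≠ x k := hzx k
    by_cases hβk : β k = 0
    · simp [hF, h1, hβk]
    · simp [hF, h1, hzy k hβk]
  -- the master dominance statement
  have master : ∀ c : Fin (n+1) → ℝ, ∃ u v : M, u ≠ v ∧ ∀ a b : M, a ≠ b →
      |(∑ i, c i * F i a) - ∑ i, c i * F i b| ≤
        |(∑ i, c i * F i u) - ∑ i, c i * F i v| / dist u v * dist a b := by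
    intro c
    set G : M → ℝ := fun w => ∑ i, c i * F i w with hG
    have hGx : ∀ j, G (x j) = c j := by
      intro j
      rw [hG]; simp only
      rw [Finset.sum_eq_single j
        (fun i _ hij => by rw [hFxo j i (Ne.symm hij), mul_zero])
        (fun h => absurd (Finset.mem_univ j) h), hFxx j, mul_one]
    have hGy : ∀ j, G (y j) = -(β j * c j) := by
      intro j
      rw [hG]; simp only
      rw [Finset.sum_eq_single j
        (fun i _ hij => by rw [hFyo j i (Ne.symm hij), mul_zero])
        (fun h => absurd (Finset.mem_univ j) h), hFyy j]
      ring
    have hGout : ∀ w : M, (∀ j, w ≠ x j) → (∀ j, w = y j → β j = 0) → G w = 0 := by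
      intro w h1 h2
      rw [hG]; simp only
      apply Finset.sum_eq_zero
      intro i _
      have : F i w = 0 := by
        rw [hF]; simp only
        rw [if_neg (h1 i)]
        by_cases hw : w = y i
        · rw [h2 i hw, zero_mul, sub_zero]
        · rw [if_neg hw, mul_zero, sub_zero]
      rw [this, mul_zero]
    set E : Finset M := Finset.univ.image x ∪ Finset.univ.image y ∪ {z} with hE
    have hmemx : ∀ k, x k ∈ E := by
      intro k
      simp [hE]
    have hmemy : ∀ k, y k ∈ E := by
      intro k
      simp [hE]
    have hnotE : ∀ w, w ∉ E → (∀ j, w ≠ x j) ∧ (∀ j, w ≠ y j) ∧ w ≠ z := by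
      intro w hw
      simp only [hE, Finset.mem_union, Finset.mem_image, Finset.mem_singleton,
        Finset.mem_univ, true_and, not_or, not_exists] at hw
      exact ⟨fun j h => hw.1.1 j h.symm, fun j h => hw.1.2 j h.symm, hw.2⟩
    set T : Finset (M × M) := (E ×ˢ E).filter (fun ab => ab.1 ≠ ab.2) with hT
    have hTmem : ∀ a b : M, a ∈ E → b ∈ E → a ≠ b → (a, b) ∈ T := by
      intro a b ha hb hab
      rw [hT, Finset.mem_filter, Finset.mem_product]
      exact ⟨⟨ha, hb⟩, hab⟩
    have hTne : T.Nonempty := ⟨(x 0, y 0), hTmem _ _ (hmemx 0) (hmemy 0) (hxny 0 0)⟩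
    obtain ⟨q, hqT, hqmax⟩ := Finset.exists_max_image T
      (fun ab => |G ab.1 - G ab.2| / dist ab.1 ab.2) hTne
    have hqne : q.1 ≠ q.2 := (Finset.mem_filter.mp hqT).2
    set Q : ℝ := |G q.1 - G q.2| / dist q.1 q.2 with hQ
    have hQ0 : 0 ≤ Q := div_nonneg (abs_nonneg _) dist_nonneg
    have hqle : ∀ a b : M, (a, b) ∈ T → |G a - G b| ≤ Q * dist a b := by
      intro a b habT
      have hne : a ≠ b := (Finset.mem_filter.mp habT).2
      have h := hqmax (a, b) habT
      rw [div_le_iff₀ (dist_pos.mpr hne)] at h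
      calc |G a - G b| ≤ |G q.1 - G q.2| / dist q.1 q.2 * dist a b := h
        _ = Q * dist a b := rfl
    have hpair : ∀ k, (1 + β k) * |c k| ≤ Q * d k := by
      intro k
      have h := hqle (x k) (y k) (hTmem _ _ (hmemx k) (hmemy k) (hxny k k))
      have hval : |G (x k) - G (y k)| = (1 + β k) * |c k| := by
        rw [hGx k, hGy k, sub_neg_eq_add]
        calc |c k + β k * c k| = |(1 + β k) * c k| := by ring_nf
          _ = |1 + β k| * |c k| := abs_mul _ _
          _ = (1 + β k) * |c k| := by rw [abs_of_pos (hβ1 k)]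
      rw [hval] at h
      exact h
    have onesided : ∀ a b : M, a ≠ b → (∀ j, b ≠ x j) → (∀ j, b ≠ y j) → b ≠ z →
        |G a - G b| ≤ Q * dist a b := by
      intro a b hab hbx' hby' hbz
      have hGb : G b = 0 := hGout b hbx' (fun j h => absurd h (hby' j))
      rw [hGb, sub_zero]
      by_cases hax : ∃ j, a = x j
      · obtain ⟨j, rfl⟩ := hax
        rw [hGx j]
        have h1 := hpair j
        have h2 := hbx j b hbz hbx' hby'
        have h3 : Q * d j ≤ Q * ((1 + β j) * dist (x j) b) :=
          mul_le_mul_of_nonneg_left h2 hQ0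
        have h4 : (1 + β j) * |c j| ≤ (1 + β j) * (Q * dist (x j) b) := by
          calc (1 + β j) * |c j| ≤ Q * ((1 + β j) * dist (x j) b) := le_trans h1 h3
            _ = (1 + β j) * (Q * dist (x j) b) := by ring
        exact le_of_mul_le_mul_left h4 (hβ1 j)
      · by_cases hay : ∃ j, a = y j ∧ β j ≠ 0
        · obtain ⟨j, rfl, hβj⟩ := hay
          rw [hGy j]
          rw [abs_neg, abs_mul, abs_of_nonneg (hβ j)]
          have h1 := hpair j
          have h2 := hby j b hbz hbx' hby'
          have h5 : ((1 + β j) * d j) * (β j * |c j|) ≤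
              ((1 + β j) * d j) * (Q * dist (y j) b) := by
            calc ((1 + β j) * d j) * (β j * |c j|)
                = ((1 + β j) * |c j|) * (β j * d j) := by ring
              _ ≤ (Q * d j) * ((1 + β j) * dist (y j) b) := by
                  apply mul_le_mul h1 h2 (mul_nonneg (hβ j) (le_of_lt (hdpos j)))
                    (mul_nonneg hQ0 (le_of_lt (hdpos j)))
              _ = ((1 + β j) * d j) * (Q * dist (y j) b) := by ring
          exact le_of_mul_le_mul_left h5 (mul_pos (hβ1 j) (hdpos j))
        · have hGa : G a = 0 := by
            apply hGout a
            · intro j h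
              exact hax ⟨j, h⟩
            · intro j h
              by_contra hβj
              exact hay ⟨j, h, hβj⟩
          rw [hGa, abs_zero]
          exact mul_nonneg hQ0 dist_nonneg
    refine ⟨q.1, q.2, hqne, ?_⟩
    intro a b hab
    have hdom : |G a - G b| ≤ Q * dist a b := by
      by_cases hbE : b ∈ E
      · by_cases haE : a ∈ E
        · exact hqle a b (hTmem a b haE hbE hab)
        · obtain ⟨h1, h2, h3⟩ := hnotE a haE
          have h := onesided b a (Ne.symm hab) h1 h2 h3
          rw [abs_sub_comm, dist_comm] at h
          exact h
      · obtain ⟨h1, h2, h3⟩ := hnotE b hbE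
        exact onesided a b hab h1 h2 h3
    exact hdom
  -- assemble
  refine ⟨F, ?_, ?_, ?_⟩
  · apply linIndep_of_eval
    intro k
    refine ⟨x k, ?_, fun j hj => hFxo k j (fun h => hj h.symm)⟩
    rw [hFxx k]
    exact one_ne_zero
  · intro i
    refine ⟨hFz i, ?_⟩
    obtain ⟨u, v, huv, hdom⟩ := master (Pi.single i (1:ℝ))
    have hsingle : ∀ w : M, (∑ j, (Pi.single i (1:ℝ) : Fin (n+1) → ℝ) j * F j w) = F i w := by
      intro w
      rw [Finset.sum_eq_single i
        (fun j _ hji => by rw [Pi.single_eq_of_ne hji, zero_mul])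
        (fun h => absurd (Finset.mem_univ i) h), Pi.single_eq_same, one_mul]
    refine ⟨|F i u - F i v| / dist u v, ?_⟩
    intro a b
    by_cases hab : a = b
    · subst hab
      simp [sub_self, abs_zero, dist_self]
    · have h := hdom a b hab
      rw [hsingle a, hsingle b, hsingle u, hsingle v] at h
      exact h
  · intro c
    obtain ⟨u, v, huv, hdom⟩ := master c
    exact attains_of_dominant _ u v huv hdom

private lemma cone_assemble (p : M)
    (H : ∀ ε : ℝ, 0 < ε → ∃ u v : M, u ≠ p ∧ 0 < dist u p ∧ dist u p ≤ ε ∧ v ≠ u ∧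
      dist u v ≤ dist u p / 4) :
    ∀ (n : ℕ) (θ : ℝ), 0 < θ → ∃ x y : Fin n → M,
      (∀ k, x k ≠ y k ∧ 0 < dist (x k) p ∧ dist (x k) p ≤ θ ∧
        dist (x k) (y k) ≤ dist (x k) p / 4) ∧
      (∀ j k, j ≠ k → dist (x j) (y j) + dist (x k) (y k) ≤ dist (x j) (x k)) := by
  intro n
  induction n with
  | zero =>
    intro θ hθ
    exact ⟨Fin.elim0, Fin.elim0, fun k => k.elim0, fun j => j.elim0⟩
  | succ m ih =>
    intro θ hθ
    obtain ⟨a, b, hap, hap0, hapθ, hba, hab4⟩ := H θ hθ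
    obtain ⟨xs, ys, hk, hjk⟩ := ih (dist a p / 8) (by linarith)
    have sep : ∀ i : Fin m, dist a b + dist (xs i) (ys i) ≤ dist a (xs i) := by
      intro i
      obtain ⟨h1, h2, h3, h4⟩ := hk i
      have htri : dist a p ≤ dist a (xs i) + dist (xs i) p := dist_triangle a (xs i) p
      linarith
    refine ⟨Fin.cons a xs, Fin.cons b ys, ?_, ?_⟩
    · intro k
      refine Fin.cases ?_ ?_ k
      · simp only [Fin.cons_zero]
        exact ⟨Ne.symm hba, hap0, hapθ, hab4⟩
      · intro i
        simp only [Fin.cons_succ]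
        obtain ⟨h1, h2, h3, h4⟩ := hk i
        exact ⟨h1, h2, le_trans h3 (by linarith), h4⟩
    · intro j
      refine Fin.cases ?_ ?_ j
      · intro k
        refine Fin.cases ?_ ?_ k
        · intro h; exact absurd rfl h
        · intro i _
          simp only [Fin.cons_zero, Fin.cons_succ]
          exact sep i
      · intro i k
        refine Fin.cases ?_ ?_ k
        · intro _
          simp only [Fin.cons_zero, Fin.cons_succ]
          rw [dist_comm (xs i) a]
          linarith [sep i]
        · intro i' h
          simp only [Fin.cons_succ]
          exact hjk i i' (fun hh => h (congrArg Fin.succ hh))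

private lemma local_assemble (p : M)
    (H : ∀ ε : ℝ, 0 < ε → ∃ x y : M, ∃ β : ℝ, x ≠ p ∧ 0 < dist x p ∧ dist x p ≤ ε ∧
      x ≠ y ∧ dist y p ≤ 2 * dist x p ∧ 0 ≤ β ∧ (β ≠ 0 → y ≠ p) ∧
      (∀ w : M, w ≠ x → w ≠ y → dist x y ≤ (1 + β) * dist x w) ∧
      (∀ w : M, w ≠ x → w ≠ y → β * dist x y ≤ (1 + β) * dist y w)) :
    ∀ (n : ℕ) (θ : ℝ), 0 < θ → ∃ (x y : Fin n → M) (β : Fin n → ℝ),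
      (∀ k, x k ≠ p ∧ 0 < dist (x k) p ∧ dist (x k) p ≤ θ ∧
        dist (y k) p ≤ 2 * dist (x k) p ∧ x k ≠ y k ∧ 0 ≤ β k ∧ (β k ≠ 0 → y k ≠ p) ∧
        (∀ w : M, w ≠ x k → w ≠ y k → dist (x k) (y k) ≤ (1 + β k) * dist (x k) w) ∧
        (∀ w : M, w ≠ x k → w ≠ y k → β k * dist (x k) (y k) ≤ (1 + β k) * dist (y k) w)) ∧
      (∀ j k, j ≠ k → x j ≠ x k ∧ x j ≠ y k ∧ (β j ≠ 0 → y j ≠ y k)) := by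
  classical
  intro n
  induction n with
  | zero =>
    intro θ hθ
    exact ⟨Fin.elim0, Fin.elim0, Fin.elim0, fun k => k.elim0, fun j => j.elim0⟩
  | succ m ih =>
    intro θ hθ
    obtain ⟨a, b, β₀, hap, hap0, hapθ, hab, hbp2, hβ0, hβp, hbx0, hby0⟩ := H θ hθ
    set t : ℝ := min (dist a p) (if b = p then dist a p else dist b p) with ht
    have htpos : 0 < t := by
      rw [ht]
      by_cases hbp : b = p
      · rw [if_pos hbp, min_self]
        exact hap0
      · rw [if_neg hbp]
        exact lt_min hap0 (dist_pos.mpr hbp)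
    have hta : t ≤ dist a p := min_le_left _ _
    have htb : b ≠ p → t ≤ dist b p := by
      intro hbp
      rw [ht, if_neg hbp]
      exact min_le_right _ _
    obtain ⟨xs, ys, βs, hk, hjk⟩ := ih (t / 8) (by linarith)
    -- scale facts for the old points
    have hxs_small : ∀ i, dist (xs i) p ≤ t / 8 := fun i => (hk i).2.2.1
    have hys_small : ∀ i, dist (ys i) p ≤ t / 4 := by
      intro i
      have h1 := (hk i).2.2.2.1
      have h2 := hxs_small i
      linarith
    have hxs_pos : ∀ i, 0 < dist (xs i) p := fun i => (hk i).2.1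
    have haxs : ∀ i, a ≠ xs i := by
      intro i h
      have := hxs_small i
      rw [← h] at this
      linarith
    have hays : ∀ i, a ≠ ys i := by
      intro i h
      have := hys_small i
      rw [← h] at this
      linarith
    have hbxs : ∀ i, xs i ≠ b := by
      intro i h
      by_cases hbp : b = p
      · exact (hk i).1 (h.trans hbp)
      · have h1 := htb hbp
        have h2 := hxs_small i
        rw [h] at h2
        linarith
    have hbys : β₀ ≠ 0 → ∀ i, b ≠ ys i := by
      intro hβ i h
      have h1 := htb (hβp hβ)
      have h2 := hys_small i
      rw [← h] at h2
      linarith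
    have hysb : ∀ i, βs i ≠ 0 → ys i ≠ b := by
      intro i hβ h
      by_cases hbp : b = p
      · exact ((hk i).2.2.2.2.2.2.1 hβ) (h.trans hbp)
      · have h1 := htb hbp
        have h2 := hys_small i
        rw [h] at h2
        linarith
    refine ⟨Fin.cons a xs, Fin.cons b ys, Fin.cons β₀ βs, ?_, ?_⟩
    · intro k
      refine Fin.cases ?_ ?_ k
      · simp only [Fin.cons_zero]
        exact ⟨hap, hap0, hapθ, hbp2, hab, hβ0, hβp, hbx0, hby0⟩
      · intro i
        simp only [Fin.cons_succ]
        obtain ⟨h1, h2, h3, h4, h5, h6, h7, h8, h9⟩ := hk i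
        exact ⟨h1, h2, le_trans h3 (by linarith), h4, h5, h6, h7, h8, h9⟩
    · intro j
      refine Fin.cases ?_ ?_ j
      · intro k
        refine Fin.cases ?_ ?_ k
        · intro h; exact absurd rfl h
        · intro i _
          simp only [Fin.cons_zero, Fin.cons_succ]
          exact ⟨haxs i, hays i, fun hβ => hbys hβ i⟩
      · intro i k
        refine Fin.cases ?_ ?_ k
        · intro _
          simp only [Fin.cons_zero, Fin.cons_succ]
          exact ⟨fun h => (haxs i) h.symm, hbxs i, fun hβ => hysb i hβ⟩
        · intro i' h
          simp only [Fin.cons_succ]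
          exact hjk i i' (fun hh => h (congrArg Fin.succ hh))

private lemma no_cluster_pair [CompleteSpace M] [Infinite M]
    (hnc : ∀ p : M, ∃ ε : ℝ, 0 < ε ∧ ∀ w : M, w ≠ p → ε ≤ dist w p)
    (G : Finset M) :
    ∃ u v : M, u ∉ G ∧ v ∉ G ∧ u ≠ v ∧ ∀ w : M, w ∉ G → w ≠ u → w ≠ v →
      dist u v ≤ (3/2) * dist u w ∧ (1/2) * dist u v ≤ (3/2) * dist v w := by
  classical
  set S : M → Set ℝ := fun a => {r | ∃ w : M, w ∉ G ∧ w ≠ a ∧ r = dist a w} with hS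
  have hSne : ∀ a, (S a).Nonempty := by
    intro a
    obtain ⟨w, hw⟩ := Infinite.exists_notMem_finset (insert a G)
    refine ⟨dist a w, w, fun h => hw (Finset.mem_insert_of_mem h),
      fun h => hw (h ▸ Finset.mem_insert_self a G), rfl⟩
  have hSbdd : ∀ a, BddBelow (S a) := by
    intro a
    refine ⟨0, ?_⟩
    rintro r ⟨w, _, _, rfl⟩
    exact dist_nonneg
  set ρ : M → ℝ := fun a => sInf (S a) with hρ
  have hρle : ∀ (a w : M), w ∉ G → w ≠ a → ρ a ≤ dist a w := by
    intro a w h1 h2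
    exact csInf_le (hSbdd a) ⟨w, h1, h2, rfl⟩
  have hρpos : ∀ a, 0 < ρ a := by
    intro a
    obtain ⟨ε, hε0, hε⟩ := hnc a
    have h : ε ≤ ρ a := by
      apply le_csInf (hSne a)
      rintro r ⟨w, _, hwa, rfl⟩
      rw [dist_comm]
      exact hε w hwa
    linarith
  by_contra hng
  push_neg at hng
  have step : ∀ u : M, u ∉ G →
      ∃ v : M, v ∉ G ∧ dist u v ≤ (9/8) * ρ u ∧ ρ v ≤ (3/8) * ρ u ∧ ρ v < ρ u := by
    intro u hu
    have h1 : ρ u < (9/8) * ρ u := by linarith [hρpos u]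
    obtain ⟨r, ⟨v, hvG, hvu, rfl⟩, hr⟩ := (csInf_lt_iff (hSbdd u) (hSne u)).mp h1
    obtain ⟨w, hwG, hwu, hwv, hbad⟩ := hng u v hu hvG (Ne.symm hvu)
    have hA : dist u v ≤ (3/2) * dist u w := by
      by_contra hcon
      push_neg at hcon
      have h2 := hρle u w hwG hwu
      linarith [hρpos u]
    have hB := hbad hA
    have hρv : ρ v ≤ dist v w := hρle v w hwG hwv
    refine ⟨v, hvG, le_of_lt hr, by linarith, by linarith [hρpos u]⟩
  choose! vf hv1 hv2 hv3 hv4 using step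
  obtain ⟨a0, ha0⟩ := Infinite.exists_notMem_finset G
  set seq : ℕ → M := fun m => Nat.rec a0 (fun _ prev => vf prev) m with hseq
  have hseqS : ∀ m, seq (m+1) = vf (seq m) := fun m => rfl
  have hseqG : ∀ m, seq m ∉ G := by
    intro m
    induction m with
    | zero => exact ha0
    | succ k ihk =>
      rw [hseqS]
      exact hv1 (seq k) ihk
  have hgeom : ∀ m, ρ (seq m) ≤ (3/8)^m * ρ a0 := by
    intro m
    induction m with
    | zero => simp [hseq]
    | succ k ihk =>
      have h1 : ρ (seq (k+1)) ≤ (3/8) * ρ (seq k) := by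
        rw [hseqS]
        exact hv3 (seq k) (hseqG k)
      calc ρ (seq (k+1)) ≤ (3/8) * ρ (seq k) := h1
        _ ≤ (3/8) * ((3/8)^k * ρ a0) := by
            apply mul_le_mul_of_nonneg_left ihk (by norm_num)
        _ = (3/8)^(k+1) * ρ a0 := by ring
  have hdist : ∀ m, dist (seq m) (seq (m+1)) ≤ ((9/8) * ρ a0) * (3/8)^m := by
    intro m
    have h1 : dist (seq m) (seq (m+1)) ≤ (9/8) * ρ (seq m) := by
      rw [hseqS]
      exact hv2 (seq m) (hseqG m)
    have h2 := hgeom m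
    calc dist (seq m) (seq (m+1)) ≤ (9/8) * ρ (seq m) := h1
      _ ≤ (9/8) * ((3/8)^m * ρ a0) := mul_le_mul_of_nonneg_left h2 (by norm_num)
      _ = ((9/8) * ρ a0) * (3/8)^m := by ring
  have hcauchy : CauchySeq seq :=
    cauchySeq_of_le_geometric (3/8) ((9/8) * ρ a0) (by norm_num) hdist
  obtain ⟨L, hL⟩ := cauchySeq_tendsto_of_complete hcauchy
  obtain ⟨ε, hε0, hε⟩ := hnc L
  rw [Metric.tendsto_atTop] at hL
  obtain ⟨N, hN⟩ := hL ε hε0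
  have hEQ : ∀ m, N ≤ m → seq m = L := by
    intro m hm
    by_contra hne
    exact absurd (hN m hm) (not_lt.mpr (hε (seq m) hne))
  have h1 := hEQ N le_rfl
  have h2 := hEQ (N+1) (by omega)
  have h3 : ρ (seq (N+1)) < ρ (seq N) := by
    rw [hseqS]
    exact hv4 (seq N) (hseqG N)
  rw [h1, h2] at h3
  exact lt_irrefl _ h3

private lemma greedy_assemble [CompleteSpace M] [Infinite M]
    (hnc : ∀ p : M, ∃ ε : ℝ, 0 < ε ∧ ∀ w : M, w ≠ p → ε ≤ dist w p) :
    ∀ (n : ℕ) (G : Finset M), ∃ x y : Fin n → M,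
      (∀ k, x k ∉ G ∧ y k ∉ G ∧ x k ≠ y k) ∧
      (∀ j k, j ≠ k → x j ≠ x k ∧ x j ≠ y k ∧ y j ≠ y k) ∧
      (∀ k (w : M), w ∉ G → (∀ j, w ≠ x j) → (∀ j, w ≠ y j) →
        dist (x k) (y k) ≤ (3/2) * dist (x k) w ∧
        (1/2) * dist (x k) (y k) ≤ (3/2) * dist (y k) w) := by
  classical
  intro n
  induction n with
  | zero =>
    intro G
    exact ⟨Fin.elim0, Fin.elim0, fun k => k.elim0, fun j => j.elim0, fun k => k.elim0⟩
  | succ m ih =>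
    intro G
    obtain ⟨a, b, haG, hbG, hab, hbound⟩ := no_cluster_pair hnc G
    obtain ⟨xs, ys, h1, h2, h3⟩ := ih (insert a (insert b G))
    have hxsa : ∀ i, xs i ≠ a := fun i h => (h1 i).1
      (by rw [h]; exact Finset.mem_insert_self a _)
    have hxsb : ∀ i, xs i ≠ b := fun i h => (h1 i).1
      (by rw [h]; exact Finset.mem_insert_of_mem (Finset.mem_insert_self b G))
    have hysa : ∀ i, ys i ≠ a := fun i h => (h1 i).2.1
      (by rw [h]; exact Finset.mem_insert_self a _)
    have hysb : ∀ i, ys i ≠ b := fun i h => (h1 i).2.1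
      (by rw [h]; exact Finset.mem_insert_of_mem (Finset.mem_insert_self b G))
    have hxsG : ∀ i, xs i ∉ G := fun i h =>
      (h1 i).1 (Finset.mem_insert_of_mem (Finset.mem_insert_of_mem h))
    have hysG : ∀ i, ys i ∉ G := fun i h =>
      (h1 i).2.1 (Finset.mem_insert_of_mem (Finset.mem_insert_of_mem h))
    refine ⟨Fin.cons a xs, Fin.cons b ys, ?_, ?_, ?_⟩
    · intro k
      refine Fin.cases ?_ ?_ k
      · simp only [Fin.cons_zero]
        exact ⟨haG, hbG, hab⟩
      · intro i
        simp only [Fin.cons_succ]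
        exact ⟨hxsG i, hysG i, (h1 i).2.2⟩
    · intro j
      refine Fin.cases ?_ ?_ j
      · intro k
        refine Fin.cases ?_ ?_ k
        · intro h; exact absurd rfl h
        · intro i _
          simp only [Fin.cons_zero, Fin.cons_succ]
          exact ⟨Ne.symm (hxsa i), Ne.symm (hysa i), Ne.symm (hysb i)⟩
      · intro i k
        refine Fin.cases ?_ ?_ k
        · intro _
          simp only [Fin.cons_zero, Fin.cons_succ]
          exact ⟨hxsa i, hxsb i, hysb i⟩
        · intro i' h
          simp only [Fin.cons_succ]
          exact h2 i i' (fun hh => h (congrArg Fin.succ hh))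
    · intro k w hwG hwx hwy
      have hwa : w ≠ a := by
        have := hwx 0
        simpa using this
      have hwb : w ≠ b := by
        have := hwy 0
        simpa using this
      refine Fin.cases ?_ ?_ k
      · simp only [Fin.cons_zero]
        exact hbound w hwG hwa hwb
      · intro i
        simp only [Fin.cons_succ]
        refine h3 i w ?_ ?_ ?_
        · simp only [Finset.mem_insert, not_or]
          exact ⟨hwa, hwb, hwG⟩
        · intro j
          have := hwx j.succ
          simpa using this
        · intro j
          have := hwy j.succ
          simpa using this

private lemma local_to_conclusion (p z : M) {m : ℕ}
    (H : ∀ ε : ℝ, 0 < ε → ∃ x y : M, ∃ β : ℝ, x ≠ p ∧ 0 < dist x p ∧ dist x p ≤ ε ∧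
      x ≠ y ∧ dist y p ≤ 2 * dist x p ∧ 0 ≤ β ∧ (β ≠ 0 → y ≠ p) ∧
      (∀ w : M, w ≠ x → w ≠ y → dist x y ≤ (1 + β) * dist x w) ∧
      (∀ w : M, w ≠ x → w ≠ y → β * dist x y ≤ (1 + β) * dist y w)) :
    ∃ f : Fin (m+1) → M → ℝ, LinearIndependent ℝ f ∧
      (∀ i, f i z = 0 ∧ ∃ K : ℝ, IsLipWith K (f i)) ∧
      ∀ c : Fin (m+1) → ℝ, StronglyAttains (fun w => ∑ i, c i * f i w) := by
  classical
  set θ₀ : ℝ := if z = p then 1 else dist z p / 4 with hθ₀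
  have hθ₀pos : 0 < θ₀ := by
    rw [hθ₀]
    by_cases hzp : z = p
    · rw [if_pos hzp]; norm_num
    · rw [if_neg hzp]
      have := dist_pos.mpr hzp
      linarith
  obtain ⟨x, y, β, hk, hpair⟩ := local_assemble p H (m+1) θ₀ hθ₀pos
  have hzx : ∀ k, z ≠ x k := by
    intro k
    by_cases hzp : z = p
    · rw [hzp]
      exact Ne.symm (hk k).1
    · have hθval : θ₀ = dist z p / 4 := by rw [hθ₀, if_neg hzp]
      have h3 := (hk k).2.2.1
      rw [hθval] at h3
      intro h
      rw [← h] at h3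
      have := dist_pos.mpr hzp
      linarith
  have hzy : ∀ k, β k ≠ 0 → z ≠ y k := by
    intro k hβk
    by_cases hzp : z = p
    · rw [hzp]
      exact Ne.symm ((hk k).2.2.2.2.2.2.1 hβk)
    · have hθval : θ₀ = dist z p / 4 := by rw [hθ₀, if_neg hzp]
      have h3 := (hk k).2.2.1
      have h4 := (hk k).2.2.2.1
      rw [hθval] at h3
      intro h
      rw [← h] at h4
      have := dist_pos.mpr hzp
      linarith
  have hβ0 : ∀ k, 0 ≤ β k := fun k => (hk k).2.2.2.2.2.1
  have hxyk : ∀ k, x k ≠ y k := fun k => (hk k).2.2.2.2.1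
  have hxinj : Function.Injective x := by
    intro j k h
    by_contra hne
    exact (hpair j k hne).1 h
  have hxny : ∀ j k, x j ≠ y k := by
    intro j k
    by_cases hjk : j = k
    · subst hjk
      exact hxyk j
    · exact (hpair j k hjk).2.1
  have hyy : ∀ j k, j ≠ k → β j ≠ 0 → y j ≠ y k := fun j k h hb => (hpair j k h).2.2 hb
  have hbx : ∀ k (w : M), w ≠ z → (∀ j, w ≠ x j) → (∀ j, w ≠ y j) →
      dist (x k) (y k) ≤ (1 + β k) * dist (x k) w := by
    intro k w _ h1 h2
    exact (hk k).2.2.2.2.2.2.2.1 w (h1 k) (h2 k)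
  have hby : ∀ k (w : M), w ≠ z → (∀ j, w ≠ x j) → (∀ j, w ≠ y j) →
      β k * dist (x k) (y k) ≤ (1 + β k) * dist (y k) w := by
    intro k w _ h1 h2
    exact (hk k).2.2.2.2.2.2.2.2 w (h1 k) (h2 k)
  exact dipole_construction z x y β hβ0 hxinj hxny hyy hzx hzy hbx hby

end SNA

/-- for every infinite complete pointed metric space `M` and every `n`,
`SNA(M)` contains a linear subspace of `Lip_0(M)` of dimension `n`: there are `n` linearly
independent Lipschitz functions vanishing at the base point all of whose linear
combinations strongly attain their Lipschitz norm. -/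
theorem stmt16 {M : Type*} [MetricSpace M] [CompleteSpace M] [Infinite M] (z : M)
    (n : ℕ) :
    ∃ f : Fin n → M → ℝ, LinearIndependent ℝ f ∧
      (∀ i, f i z = 0 ∧ ∃ K : ℝ, IsLipWith K (f i)) ∧
      ∀ c : Fin n → ℝ, StronglyAttains (fun w => ∑ i, c i * f i w) := by
  classical
  obtain _ | m := n
  · -- n = 0
    refine ⟨Fin.elim0, linearIndependent_empty_type, fun i => i.elim0, ?_⟩
    intro c
    obtain ⟨a, b, hab⟩ := exists_pair_ne M
    apply attains_of_dominant _ a b hab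
    intro a' b' h
    simp
  · -- n = m + 1
    by_cases hclus : ∃ p : M, ∀ ε : ℝ, 0 < ε → ∃ w : M, w ≠ p ∧ dist w p < ε
    · obtain ⟨p, hp⟩ := hclus
      by_cases hIa : ∀ ε : ℝ, 0 < ε → ∃ u v : M, u ≠ p ∧ 0 < dist u p ∧ dist u p ≤ ε ∧
          v ≠ u ∧ dist u v ≤ dist u p / 4
      · -- cone case
        set θ₀ : ℝ := if z = p then 1 else dist z p / 2 with hθ₀
        have hθ₀pos : 0 < θ₀ := by
          rw [hθ₀]
          by_cases hzp : z = p
          · rw [if_pos hzp]; norm_num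
          · rw [if_neg hzp]
            have := dist_pos.mpr hzp
            linarith
        obtain ⟨x, y, hk, hsep⟩ := cone_assemble p hIa (m+1) θ₀ hθ₀pos
        have hzd : ∀ k, dist (x k) (y k) ≤ dist z (x k) := by
          intro k
          obtain ⟨h1, h2, h3, h4⟩ := hk k
          by_cases hzp : z = p
          · rw [hzp, dist_comm p (x k)]
            linarith
          · have hθval : θ₀ = dist z p / 2 := by rw [hθ₀, if_neg hzp]
            have htri : dist z p ≤ dist z (x k) + dist (x k) p := dist_triangle z (x k) p
            rw [hθval] at h3
            linarith
        exact cone_construction z x y (fun k => (hk k).1) hzd hsep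
      · -- case I.b : around p, every point is (1/4)-relatively isolated
        push_neg at hIa
        obtain ⟨δ, hδ0, hIb⟩ := hIa
        have hIb' : ∀ u : M, u ≠ p → dist u p ≤ δ → ∀ v : M, v ≠ u →
            dist u p / 4 < dist u v :=
          fun u h1 h2 v h3 => hIb u v h1 (dist_pos.mpr h1) h2 h3
        by_cases hi : ∀ ε : ℝ, 0 < ε → ∃ x' : M, x' ≠ p ∧ dist x' p ≤ ε ∧
            ∃ y' : M, y' ≠ x' ∧ y' ≠ p ∧ dist x' y' ≤ 3/8 * dist x' p
        · -- leaf (i)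
          apply local_to_conclusion p z
          intro ε hε
          obtain ⟨x', hx'p, hx'ε, y', hy'x, hy'p, hxy38⟩ :=
            hi (min ε (δ/2)) (lt_min hε (by linarith))
          have hx'δ : dist x' p ≤ δ/2 := le_trans hx'ε (min_le_right _ _)
          have hs0 : 0 < dist x' p := dist_pos.mpr hx'p
          have hy'd : dist y' p ≤ 2 * dist x' p := by
            have h := dist_triangle y' x' p
            rw [dist_comm y' x'] at h
            linarith
          refine ⟨x', y', 3/5, hx'p, hs0, le_trans hx'ε (min_le_left _ _),
            Ne.symm hy'x, hy'd, by norm_num, fun _ => hy'p, ?_, ?_⟩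
          · intro w hwx hwy
            have h1 := hIb' x' hx'p (by linarith) w hwx
            linarith
          · intro w hwx hwy
            have hy'low : dist x' p - dist x' y' ≤ dist y' p := by
              have h := dist_triangle x' y' p
              linarith
            have hy'δ : dist y' p ≤ δ := by linarith
            have h1 := hIb' y' hy'p hy'δ w hwy
            linarith
        · push_neg at hi
          obtain ⟨ε₁, hε₁0, hnCL⟩ := hi
          by_cases hA : ∀ ε : ℝ, 0 < ε → ∃ x' : M, x' ≠ p ∧ dist x' p ≤ ε ∧
              ∀ w : M, w ≠ x' → w ≠ p → dist x' p ≤ dist x' w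
          · -- mono leaf
            apply local_to_conclusion p z
            intro ε hε
            obtain ⟨x', hx'p, hx'ε, hmono⟩ := hA ε hε
            have hs0 : 0 < dist x' p := dist_pos.mpr hx'p
            refine ⟨x', p, 0, hx'p, hs0, hx'ε, hx'p, ?_, le_refl 0,
              fun h => absurd rfl h, ?_, ?_⟩
            · rw [dist_self]
              linarith
            · intro w hwx hwp
              have := hmono w hwx hwp
              linarith
            · intro w hwx hwp
              have h0 : (0:ℝ) ≤ dist p w := dist_nonneg
              nlinarith
          · -- leaf (B)
            push_neg at hA
            obtain ⟨ε₂, hε₂0, hT⟩ := hA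
            apply local_to_conclusion p z
            intro ε hε
            have hεmin : (0:ℝ) < min ε (min (ε₁/2) ε₂) := by
              refine lt_min hε (lt_min (by linarith) hε₂0)
            obtain ⟨x', hx'p, hx'small⟩ := hp _ hεmin
            have hs0 : 0 < dist x' p := dist_pos.mpr hx'p
            have hx'ε : dist x' p ≤ ε := le_of_lt (lt_of_lt_of_le hx'small (min_le_left _ _))
            have hx'ε₁ : dist x' p ≤ ε₁/2 :=
              le_of_lt (lt_of_lt_of_le hx'small (le_trans (min_le_right _ _) (min_le_left _ _)))
            have hx'ε₂ : dist x' p ≤ ε₂ :=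
              le_of_lt (lt_of_lt_of_le hx'small (le_trans (min_le_right _ _) (min_le_right _ _)))
            obtain ⟨w₀, hw₀x, hw₀p, hw₀lt⟩ := hT x' hx'p hx'ε₂
            set s : ℝ := dist x' p with hs
            set Sx : Set ℝ := {r | ∃ w : M, w ≠ x' ∧ w ≠ p ∧ r = dist x' w} with hSx
            have hSne : Sx.Nonempty := ⟨dist x' w₀, w₀, hw₀x, hw₀p, rfl⟩
            have hSbdd : BddBelow Sx := by
              refine ⟨0, ?_⟩
              rintro r ⟨w, _, _, rfl⟩
              exact dist_nonneg
            set r : ℝ := sInf Sx with hr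
            have hr38 : 3/8 * s ≤ r := by
              apply le_csInf hSne
              rintro t ⟨w, h1, h2, rfl⟩
              exact le_of_lt (hnCL x' hx'p (by linarith) w h1 h2)
            have hrs : r < s := lt_of_le_of_lt (csInf_le hSbdd ⟨w₀, hw₀x, hw₀p, rfl⟩) hw₀lt
            have hr0 : 0 < r := by linarith
            set Δ : ℝ := (s - r)/100 with hΔ
            have hΔ0 : 0 < Δ := by rw [hΔ]; linarith
            have hΔr : Δ ≤ r := by
              rw [hΔ]
              linarith
            obtain ⟨t, ⟨y', hy'x, hy'p, rfl⟩, hylt⟩ :=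
              (csInf_lt_iff hSbdd hSne).mp (show r < r + Δ by linarith)
            have hrd : r ≤ dist x' y' := csInf_le hSbdd ⟨y', hy'x, hy'p, rfl⟩
            have hds : dist x' y' < s := by
              rw [hΔ] at hylt
              linarith
            set β : ℝ := 2*Δ/r with hβ
            have hβ0 : 0 ≤ β := by positivity
            have hy'low : s - dist x' y' ≤ dist y' p := by
              have h := dist_triangle x' y' p
              linarith
            have hy'2s : dist y' p ≤ 2 * s := by
              have h := dist_triangle y' x' p
              rw [dist_comm y' x'] at h
              linarith
            have hkey : (1+β)*r = r + 2*Δ := by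
              rw [hβ]
              field_simp
            have hβd : β * dist x' y' ≤ 4*Δ := by
              rw [hβ, div_mul_eq_mul_div, div_le_iff₀ hr0]
              nlinarith
            have hylow99 : 99*Δ ≤ dist y' p := by
              rw [hΔ] at hylt ⊢
              linarith
            refine ⟨x', y', β, hx'p, hs0, hx'ε, Ne.symm hy'x, hy'2s, hβ0,
              fun _ => hy'p, ?_, ?_⟩
            · intro w hwx hwy
              by_cases hwp : w = p
              · rw [hwp, ← hs]
                have h2 : 0 ≤ β * s := mul_nonneg hβ0 (by linarith)
                have hmul : (1+β)*s = s + β*s := by ring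
                linarith
              · have hwr : r ≤ dist x' w := csInf_le hSbdd ⟨w, hwx, hwp, rfl⟩
                have h2 : (1+β)*r ≤ (1+β)*dist x' w :=
                  mul_le_mul_of_nonneg_left hwr (by linarith)
                linarith
            · intro w hwx hwy
              by_cases hwp : w = p
              · rw [hwp]
                have h2 : 0 ≤ β * dist y' p := mul_nonneg hβ0 dist_nonneg
                have hmul : (1+β)*dist y' p = dist y' p + β*dist y' p := by ring
                linarith
              · have h1 := hnCL y' hy'p (by linarith) w hwy hwp
                have h2 : 0 ≤ β * dist y' w := mul_nonneg hβ0 dist_nonneg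
                have hmul : (1+β)*dist y' w = dist y' w + β*dist y' w := by ring
                linarith
    · -- no cluster point
      push_neg at hclus
      have hnc : ∀ p : M, ∃ ε : ℝ, 0 < ε ∧ ∀ w : M, w ≠ p → ε ≤ dist w p := by
        intro p
        obtain ⟨ε, hε0, hε⟩ := hclus p
        exact ⟨ε, hε0, fun w hw => hε w hw⟩
      obtain ⟨x, y, h1, h2, h3⟩ := greedy_assemble hnc (m+1) {z}
      have hzx : ∀ k, z ≠ x k := by
        intro k h
        exact (h1 k).1 (by rw [← h]; exact Finset.mem_singleton_self z)
      have hzy : ∀ k, z ≠ y k := by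
        intro k h
        exact (h1 k).2.1 (by rw [← h]; exact Finset.mem_singleton_self z)
      have hxinj : Function.Injective x := by
        intro j k h
        by_contra hne
        exact (h2 j k hne).1 h
      have hxny : ∀ j k, x j ≠ y k := by
        intro j k
        by_cases hjk : j = k
        · subst hjk
          exact (h1 j).2.2
        · exact (h2 j k hjk).2.1
      have hyy : ∀ j k, j ≠ k → (fun _ : Fin (m+1) => (1:ℝ)/2) j ≠ 0 → y j ≠ y k :=
        fun j k h _ => (h2 j k h).2.2
      refine dipole_construction z x y (fun _ => 1/2) (fun k => by norm_num)
        hxinj hxny hyy hzx (fun k _ => hzy k) ?_ ?_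
      · intro k w hwz hwx hwy
        have h := (h3 k w (by simpa using hwz) hwx hwy).1
        calc dist (x k) (y k) ≤ 3/2 * dist (x k) w := h
          _ = (1 + 1/2) * dist (x k) w := by ring
      · intro k w hwz hwx hwy
        have h := (h3 k w (by simpa using hwz) hwx hwy).2
        calc (1:ℝ)/2 * dist (x k) (y k) ≤ 3/2 * dist (y k) w := h
          _ = (1 + 1/2) * dist (y k) w := by ring
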